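/- Let (q_n)_{n≥1} be an enumeration of ℚ ∩ [0,1]. For each n define f_n : [0,1] → [−1,1] by f_n(x) = sin(1/(x − q_n)) for x ≠ q_n and f_n(q_n) = 0, and let f(x) = Σ_{n=1}^∞ 2^{−n} f_n(x). Let X = [0,1] × [−1,1] and E = {(x, f(x)) : x ∈ [0,1]}. Then E is not a B₁-retract of X: there is no function r : X → E that is a pointwise limit of a sequence of continuous functions X → E and satisfies r(p) = p for all p ∈ E. -/

import Mathlib

/-- A function between topological spaces is *Baire-one* if it is a pointwise limit of a
sequence of continuous functions. -/
def IsBaireOne {X Y : Type*} [TopologicalSpace X] [TopologicalSpace Y] (f : X → Y) : Prop :=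
  ∃ g : ℕ → X → Y, (∀ n, Continuous (g n)) ∧
    ∀ x, Filter.Tendsto (fun n => g n x) Filter.atTop (nhds (f x))

/-- A subset `E` of a topological space `X` is a *B₁-retract* of `X` if there exists a
Baire-one function `r : X → E` such that `r x = x` for all `x ∈ E`. -/
def IsB1Retract {X : Type*} [TopologicalSpace X] (E : Set X) : Prop :=
  ∃ r : X → E, IsBaireOne r ∧ ∀ x (hx : x ∈ E), (r x : X) = x

/-!
Write `f = a·sin(1/(x - q n)) + (rest)` with `a = 2^{-(n+1)}`: the rest is a uniformly convergent
series of functions continuous at `q n`, so `f` oscillates by at least a fixed amount on both sides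
of every rational `q n`. Now let `x ↦ (u x, f (u x))` be a continuous map from the square into the
graph. Near a point where `u = q n`, continuity of `f ∘ u` and local connectedness of the square
force `u` to stay equal to `q n`, so each level set `u⁻¹{q n}` is clopen. Since the square is
connected and the rationals are dense, `u` is constant. Hence every continuous map into the graph
is constant, and so is every pointwise limit of such maps, which rules out a retraction onto the
graph, a set with more than one point.
-/

open Filter Topology Set Real

def OscillatesAt (f : ℝ → ℝ) (c : ℝ) : Prop :=
  ∃ ε > 0, (∃ᶠ x in 𝓝[<] c, ε ≤ dist (f x) (f c)) ∧ ∃ᶠ x in 𝓝[>] c, ε ≤ dist (f x) (f c)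

section Oscillation

variable {f g : ℝ → ℝ} {c : ℝ}

theorem OscillatesAt.add_continuousAt (hf : OscillatesAt f c) (hg : ContinuousAt g c) :
    OscillatesAt (fun x => f x + g x) c := by
  obtain ⟨ε, hε, hlt, hgt⟩ := hf
  have hg' : ∀ᶠ x in 𝓝 c, dist (g x) (g c) < ε / 2 := Metric.tendsto_nhds.1 hg _ (half_pos hε)
  have key : ∀ x, ε ≤ dist (f x) (f c) ∧ dist (g x) (g c) < ε / 2 →
      ε / 2 ≤ dist (f x + g x) (f c + g c) := by
    rintro x ⟨hfx, hgx⟩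
    have := abs_sub (f x + g x - (f c + g c)) (g x - g c)
    rw [show f x + g x - (f c + g c) - (g x - g c) = f x - f c by ring] at this
    rw [Real.dist_eq] at *
    linarith
  exact ⟨ε / 2, half_pos hε, (hlt.and_eventually (hg'.filter_mono nhdsWithin_le_nhds)).mono key,
    (hgt.and_eventually (hg'.filter_mono nhdsWithin_le_nhds)).mono key⟩

theorem OscillatesAt.exists_dist_le (hf : OscillatesAt f c) :
    ∃ ε > 0, ∀ d ≠ c, ∃ x ∈ uIcc c d, ε ≤ dist (f x) (f c) := by
  obtain ⟨ε, hε, hlt, hgt⟩ := hf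
  refine ⟨ε, hε, fun d hd => ?_⟩
  rcases hd.lt_or_gt with h | h
  · obtain ⟨x, hxε, hx⟩ := (hlt.and_eventually (Ioo_mem_nhdsLT h)).exists
    exact ⟨x, Icc_subset_uIcc' (Ioo_subset_Icc_self hx), hxε⟩
  · obtain ⟨x, hxε, hx⟩ := (hgt.and_eventually (Ioo_mem_nhdsGT h)).exists
    exact ⟨x, Icc_subset_uIcc (Ioo_subset_Icc_self hx), hxε⟩

end Oscillation

theorem exists_mem_Ioo_sin_one_div_eq_one {d : ℝ} (hd : 0 < d) :
    ∃ e ∈ Ioo 0 d, sin (1 / e) = 1 := by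
  obtain ⟨m, hm⟩ := exists_nat_gt (1 / d)
  have hpos : 0 < π / 2 + m * (2 * π) := by positivity
  refine ⟨(π / 2 + m * (2 * π))⁻¹, ⟨inv_pos.2 hpos, ?_⟩, ?_⟩
  · rw [inv_lt_comm₀ hpos hd, ← one_div]
    nlinarith [pi_gt_three, (Nat.cast_nonneg m : (0 : ℝ) ≤ m)]
  · rw [one_div, inv_inv, sin_add_nat_mul_two_pi, sin_pi_div_two]

theorem frequently_sin_one_div_sub_eq_one (c : ℝ) :
    ∃ᶠ x in 𝓝[>] c, sin (1 / (x - c)) = 1 := by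
  refine frequently_iff.2 fun hU => ?_
  obtain ⟨b, hb, hbU⟩ := mem_nhdsGT_iff_exists_Ioo_subset.1 hU
  obtain ⟨e, he, hsin⟩ := exists_mem_Ioo_sin_one_div_eq_one (sub_pos.2 (mem_Ioi.1 hb))
  exact ⟨c + e, hbU ⟨by linarith [he.1], by linarith [he.2]⟩, by rwa [add_sub_cancel_left]⟩

theorem frequently_sin_one_div_sub_eq_neg_one (c : ℝ) :
    ∃ᶠ x in 𝓝[<] c, sin (1 / (x - c)) = -1 := by
  refine frequently_iff.2 fun hU => ?_
  obtain ⟨b, hb, hbU⟩ := mem_nhdsLT_iff_exists_Ioo_subset.1 hU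
  obtain ⟨e, he, hsin⟩ := exists_mem_Ioo_sin_one_div_eq_one (sub_pos.2 (mem_Iio.1 hb))
  exact ⟨c - e, hbU ⟨by linarith [he.2], by linarith [he.1]⟩, by
    rw [sub_sub_cancel_left, one_div_neg_eq_neg_one_div, sin_neg, hsin]⟩

theorem oscillatesAt_mul_sin_one_div_sub {a : ℝ} (ha : a ≠ 0) (c : ℝ) :
    OscillatesAt (fun x => a * sin (1 / (x - c))) c :=
  ⟨|a|, abs_pos.2 ha,
    (frequently_sin_one_div_sub_eq_neg_one c).mono fun x hx => by
      simp only [Real.dist_eq, hx]; simp,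
    (frequently_sin_one_div_sub_eq_one c).mono fun x hx => by
      simp only [Real.dist_eq, hx]; simp⟩

theorem continuousAt_tsum {ι β F : Type*} [TopologicalSpace β] [NormedAddCommGroup F]
    [CompleteSpace F] {f : ι → β → F} {u : ι → ℝ} {x : β} (hf : ∀ i, ContinuousAt (f i) x)
    (hu : Summable u) (hfu : ∀ i y, ‖f i y‖ ≤ u i) : ContinuousAt (fun y => ∑' i, f i y) x := by
  refine continuousAt_of_locally_uniform_approx_of_continuousAt fun v hv => ?_
  obtain ⟨t, ht⟩ := (tendstoUniformly_tsum hu hfu v hv).exists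
  exact ⟨univ, univ_mem, _, tendsto_finsetSum t fun i _ => hf i, fun y _ => ht y⟩

theorem oscillatesAt_tsum_mul_sin_one_div_sub {ι : Type*} {a q : ι → ℝ} (ha : Summable a)
    (hq : Function.Injective q) {n : ι} (han : a n ≠ 0) :
    OscillatesAt (fun x => ∑' k, a k * sin (1 / (x - q k))) (q n) := by
  classical
  have hbound : ∀ k x, ‖a k * sin (1 / (x - q k))‖ ≤ |a k| := fun k x => by
    rw [norm_mul, Real.norm_eq_abs, Real.norm_eq_abs]
    exact mul_le_of_le_one_right (abs_nonneg _) (abs_sin_le_one _)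
  have hrest : ContinuousAt (fun x => ∑' k, if k = n then 0 else a k * sin (1 / (x - q k)))
      (q n) := by
    refine continuousAt_tsum (fun k => ?_) ha.abs fun k x => ?_
    · split_ifs with hk
      · exact continuousAt_const
      · have : q n - q k ≠ 0 := sub_ne_zero.2 (hq.ne (Ne.symm hk))
        fun_prop (disch := assumption)
    · split_ifs
      · simp
      · exact hbound k x
  have hsplit : ∀ x, ∑' k, a k * sin (1 / (x - q k)) = a n * sin (1 / (x - q n)) +
      ∑' k, if k = n then 0 else a k * sin (1 / (x - q k)) := fun x =>
    (ha.abs.of_norm_bounded (hbound · x)).tsum_eq_add_tsum_ite n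
  simp_rw [hsplit]
  exact (oscillatesAt_mul_sin_one_div_sub han _).add_continuousAt hrest

theorem isOpen_preimage_singleton_of_oscillatesAt {Y : Type*} [TopologicalSpace Y]
    [LocallyConnectedSpace Y] {f : ℝ → ℝ} {u : Y → ℝ} {c : ℝ} (hu : Continuous u)
    (hfu : Continuous (f ∘ u)) (hf : OscillatesAt f c) : IsOpen (u ⁻¹' {c}) := by
  obtain ⟨ε, hε, hosc⟩ := hf.exists_dist_le
  refine isOpen_iff_mem_nhds.2 fun y₀ (hy₀ : u y₀ = c) => ?_
  have hV : {y | dist (f (u y)) (f c) < ε} ∈ 𝓝 y₀ := by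
    subst hy₀; exact hfu.continuousAt (Metric.ball_mem_nhds _ hε)
  filter_upwards [connectedComponentIn_mem_nhds hV] with y hy
  by_contra hyc
  obtain ⟨x, hx, hxε⟩ := hosc (u y) hyc
  have hW := ((isPreconnected_connectedComponentIn (F := {y | dist (f (u y)) (f c) < ε})
    (x := y₀)).image u hu.continuousOn).ordConnected
  obtain ⟨z, hz, rfl⟩ := hW.uIcc_subset
    ⟨y₀, mem_connectedComponentIn (mem_of_mem_nhds hV), hy₀⟩ ⟨y, hy, rfl⟩ hx
  exact (connectedComponentIn_subset _ _ hz).not_ge hxε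

theorem eq_of_continuous_comp_of_oscillatesAt {Y : Type*} [TopologicalSpace Y]
    [PreconnectedSpace Y] [LocallyConnectedSpace Y] {f : ℝ → ℝ} {s : Set ℝ}
    (hosc : ∀ a ∈ s, ∀ b ∈ s, a < b → ∃ c ∈ Ioo a b, OscillatesAt f c) {u : Y → ℝ}
    (hu : Continuous u) (hus : ∀ y, u y ∈ s) (hfu : Continuous (f ∘ u)) (x y : Y) :
    u x = u y := by
  have hnlt : ∀ x y, ¬ u x < u y := by
    intro x y hxy
    obtain ⟨c, hc, hfc⟩ := hosc _ (hus x) _ (hus y) hxy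
    obtain ⟨z, hz⟩ : c ∈ range u := (isPreconnected_range hu).ordConnected.out
      (mem_range_self x) (mem_range_self y) (Ioo_subset_Icc_self hc)
    have hclopen : IsClopen (u ⁻¹' {c}) :=
      ⟨isClosed_singleton.preimage hu, isOpen_preimage_singleton_of_oscillatesAt hu hfu hfc⟩
    have hx : x ∈ u ⁻¹' {c} := hclopen.eq_univ ⟨z, hz⟩ ▸ mem_univ x
    exact hc.1.ne hx
  exact le_antisymm (not_lt.1 (hnlt y x)) (not_lt.1 (hnlt x y))

theorem eq_of_continuous_of_forall_mem_graph {Y : Type*} [TopologicalSpace Y]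
    [PreconnectedSpace Y] [LocallyConnectedSpace Y] {f : ℝ → ℝ} {s : Set ℝ}
    (hosc : ∀ a ∈ s, ∀ b ∈ s, a < b → ∃ c ∈ Ioo a b, OscillatesAt f c) {g : Y → ℝ × ℝ}
    (hg : Continuous g) (hgraph : ∀ y, (g y).2 = f (g y).1) (hs : ∀ y, (g y).1 ∈ s) (x y : Y) :
    g x = g y := by
  have hfg : Continuous (f ∘ fun y => (g y).1) := by
    rw [show (f ∘ fun y => (g y).1) = fun y => (g y).2 from funext fun y => (hgraph y).symm]
    fun_prop
  have h1 := eq_of_continuous_comp_of_oscillatesAt hosc (by fun_prop) hs hfg x y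
  exact Prod.ext h1 (by rw [hgraph, hgraph, h1])

theorem IsB1Retract.subsingleton {X : Type*} [TopologicalSpace X] [T2Space X] {E : Set X}
    (hE : IsB1Retract E) (hconst : ∀ g : X → E, Continuous g → ∀ x y, g x = g y) :
    E.Subsingleton := by
  obtain ⟨r, ⟨g, hg, hlim⟩, hr⟩ := hE
  intro x hx y hy
  have hrxy : r x = r y :=
    tendsto_nhds_unique (hlim x) ((hlim y).congr fun n => hconst _ (hg n) y x)
  rw [← hr x hx, ← hr y hy, hrxy]

theorem hasSum_one_div_two_pow_succ : HasSum (fun n : ℕ => (1 / 2 : ℝ) ^ (n + 1)) 1 := by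
  simpa [pow_succ] using hasSum_geometric_two.mul_right (1 / 2 : ℝ)

theorem tsum_mul_sin_mem_Icc {ι : Type*} {a : ι → ℝ} (ha : HasSum a 1) (ha₀ : ∀ k, 0 ≤ a k)
    (b : ι → ℝ) : ∑' k, a k * sin (b k) ∈ Icc (-1 : ℝ) 1 := by
  rw [mem_Icc, ← abs_le, ← Real.norm_eq_abs]
  refine tsum_of_norm_bounded ha fun k => ?_
  rw [norm_mul, norm_of_nonneg (ha₀ k)]
  exact mul_le_of_le_one_right (ha₀ k) (abs_sin_le_one _)

-- The case distinction is vacuous because `1 / 0 = 0` and `sin 0 = 0`.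
theorem ite_eq_sin_one_div_sub (x c : ℝ) :
    (if x = c then 0 else sin (1 / (x - c))) = sin (1 / (x - c)) := by
  split_ifs with h <;> simp [h]

theorem graph_of_sum_of_sin_not_b1_retract
    (q : ℕ → ℝ) (hq_inj : Function.Injective q)
    (hq_range : Set.range q = {x : ℝ | x ∈ Set.Icc (0 : ℝ) 1 ∧ ∃ p : ℚ, (p : ℝ) = x})
    (f : ℝ → ℝ)
    (hf : ∀ x : ℝ, f x =
      ∑' n : ℕ, (1 / 2 : ℝ) ^ (n + 1) * (if x = q n then 0 else Real.sin (1 / (x - q n)))) :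
    ¬ IsB1Retract {p : (Set.Icc (0 : ℝ) 1 ×ˢ Set.Icc (-1 : ℝ) 1 : Set (ℝ × ℝ)) |
        (p : ℝ × ℝ).2 = f (p : ℝ × ℝ).1} := by
  have hX : Convex ℝ (Icc (0 : ℝ) 1 ×ˢ Icc (-1 : ℝ) 1) := (convex_Icc 0 1).prod (convex_Icc _ _)
  have := isPreconnected_iff_preconnectedSpace.1 hX.isPreconnected
  have := hX.locallyPathConnectedSpace
  have hf' : f = fun x => ∑' n, (1 / 2 : ℝ) ^ (n + 1) * sin (1 / (x - q n)) :=
    funext fun x => by simp only [hf, ite_eq_sin_one_div_sub]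
  have hf_mem (x : ℝ) : f x ∈ Icc (-1 : ℝ) 1 :=
    hf' ▸ tsum_mul_sin_mem_Icc hasSum_one_div_two_pow_succ (fun _ => by positivity) _
  have hosc : ∀ a ∈ Icc (0 : ℝ) 1, ∀ b ∈ Icc (0 : ℝ) 1, a < b →
      ∃ c ∈ Ioo a b, OscillatesAt f c := by
    intro a ha b hb hab
    obtain ⟨p, hap, hpb⟩ := exists_rat_btwn hab
    obtain ⟨n, hn⟩ : (p : ℝ) ∈ range q :=
      hq_range ▸ ⟨⟨ha.1.trans hap.le, hpb.le.trans hb.2⟩, p, rfl⟩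
    exact ⟨q n, hn ▸ ⟨hap, hpb⟩, hf' ▸ oscillatesAt_tsum_mul_sin_one_div_sub
      hasSum_one_div_two_pow_succ.summable hq_inj (by positivity)⟩
  intro hE
  have hsub := hE.subsingleton fun g hg x y => Subtype.val_injective <| Subtype.val_injective <|
    eq_of_continuous_of_forall_mem_graph hosc (g := fun y => ((g y : _) : ℝ × ℝ)) (by fun_prop)
      (fun y => (g y).2) (fun y => (g y).1.2.1) x y
  have h01 := hsub (x := ⟨(0, f 0), left_mem_Icc.2 zero_le_one, hf_mem 0⟩) rfl
    (y := ⟨(1, f 1), right_mem_Icc.2 zero_le_one, hf_mem 1⟩) rfl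
  exact zero_ne_one (congrArg (fun p : Icc (0 : ℝ) 1 ×ˢ Icc (-1 : ℝ) 1 => (p : ℝ × ℝ).1) h01)
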